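/- If A ∈ F_q^{n×n} is cyclic (its minimal polynomial equals its characteristic polynomial) and γ ∈ F_q is nonzero, then dim_{F_q} C(A,γ) = deg gcd(m_A^γ(x), m_A(x)), where m_A is the minimal polynomial of A and m_A^γ(x) := γ^{deg m_A} m_A(x/γ). -/

import Mathlib

/-!
Put `f = A` and `g = γ • A`. Then `C(A, γ)` is the space of `X` with `f X = X g`, and
`m_g = m_A^γ`, so `g` is cyclic as well. If `w` is a cyclic vector of `g`, an intertwiner `X` is
determined by `X w`, which can be any vector killed by `m_g(f)`; hence
`dim C(A, γ) = dim ker m_g(f)`.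

Since `K[X]` is a PID, some `v` has annihilator exactly `(m_f)`; when `f` is cyclic, such a `v`
generates `V`. For any `p`, Bézout gives `ker p(f) = ker d(f)` with `d = gcd(p, m_f)`. Writing `m_f = d e`, the vectors `(e q)(f) v` with `deg q < deg d` are
independent and lie in `ker d(f)`, and the vectors `(d q)(f) v` with `deg q < deg e` are
independent and lie in the range of `d(f)`. Since `deg d + deg e = dim V`, rank–nullity forces
`dim ker d(f) = deg d`.
-/

open Polynomial

/-- The `γ`-twisted polynomial `f^γ(x) := γ^(deg f) · f(x/γ)`. -/
noncomputable def Polynomial.twist {F : Type*} [Field F] (γ : F) (f : Polynomial F) :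
    Polynomial F :=
  γ ^ f.natDegree • f.comp (Polynomial.C γ⁻¹ * Polynomial.X)

open LinearMap

namespace Polynomial

variable {K : Type*} [Field K] {γ : K}

theorem natDegree_twist (hγ : γ ≠ 0) (p : K[X]) : (p.twist γ).natDegree = p.natDegree := by
  rw [twist, smul_eq_C_mul, natDegree_C_mul (pow_ne_zero _ hγ), natDegree_comp,
    natDegree_C_mul_X _ (inv_ne_zero hγ), mul_one]

theorem Monic.twist (hγ : γ ≠ 0) {p : K[X]} (hp : p.Monic) : (p.twist γ).Monic := by
  have hlin : (C γ⁻¹ * X).natDegree ≠ 0 := by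
    rw [natDegree_C_mul_X _ (inv_ne_zero hγ)]
    exact one_ne_zero
  rw [Monic, Polynomial.twist, smul_eq_C_mul,
    leadingCoeff_C_mul_of_isUnit (pow_ne_zero _ hγ).isUnit, leadingCoeff_comp hlin,
    hp.leadingCoeff, leadingCoeff_C_mul_X, one_mul, inv_pow, mul_inv_cancel₀ (pow_ne_zero _ hγ)]

theorem aeval_twist {A : Type*} [Ring A] [Algebra K A] (a : A) (p : K[X]) :
    aeval a (p.twist γ) = γ ^ p.natDegree • aeval (γ⁻¹ • a) p := by
  rw [twist, map_smul, aeval_comp, map_mul, aeval_C, aeval_X, ← Algebra.smul_def]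

end Polynomial

theorem minpoly.smul_eq_twist {K A : Type*} [Field K] [Ring A] [Algebra K A] {γ : K}
    (hγ : γ ≠ 0) {a : A} (ha : IsIntegral K a) :
    minpoly K (γ • a) = (minpoly K a).twist γ := by
  refine (minpoly.unique _ _ ((minpoly.monic ha).twist hγ) ?_ fun q hq hqa => ?_).symm
  · rw [aeval_twist, inv_smul_smul₀ hγ, minpoly.aeval, smul_zero]
  · have hmin := natDegree_le_natDegree <| minpoly.min K a (hq.twist (inv_ne_zero hγ))
      (by rw [aeval_twist, inv_inv, hqa, smul_zero])
    rw [natDegree_twist (inv_ne_zero hγ)] at hmin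
    rw [degree_eq_natDegree ((minpoly.monic ha).twist hγ).ne_zero, natDegree_twist hγ,
      degree_eq_natDegree hq.ne_zero]
    exact_mod_cast hmin

theorem SemiconjBy.aeval {R A : Type*} [CommSemiring R] [Semiring A] [Algebra R A] {x a b : A}
    (h : SemiconjBy x a b) (p : R[X]) : SemiconjBy x (aeval a p) (aeval b p) := by
  induction p using Polynomial.induction_on' with
  | add p q hp hq => simpa only [map_add] using hp.add_right hq
  | monomial n c =>
    simp only [aeval_monomial]
    exact SemiconjBy.mul_right (Algebra.commutes c x).symm (h.pow_right n)

theorem LinearMap.mem_ker_mulLeft_sub_mulRight {R A : Type*} [CommSemiring R] [Ring A]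
    [Algebra R A] {a b x : A} : x ∈ ker (mulLeft R a - mulRight R b) ↔ a * x = x * b := by
  rw [mem_ker, LinearMap.sub_apply, mulLeft_apply, mulRight_apply, sub_eq_zero]

theorem AlgEquiv.finrank_ker_mulLeft_sub_mulRight {K A B : Type*} [Field K] [Ring A] [Ring B]
    [Algebra K A] [Algebra K B] (e : A ≃ₐ[K] B) (a b : A) :
    Module.finrank K (ker (mulLeft K (e a) - mulRight K (e b))) =
      Module.finrank K (ker (mulLeft K a - mulRight K b)) := by
  suffices h : (ker (mulLeft K (e a) - mulRight K (e b))).map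
      (e.symm.toLinearEquiv : B →ₗ[K] A) = ker (mulLeft K a - mulRight K b) by
    rw [← h, LinearEquiv.finrank_map_eq]
  ext x
  rw [Submodule.mem_map_equiv, mem_ker_mulLeft_sub_mulRight, mem_ker_mulLeft_sub_mulRight]
  exact (congrArg₂ _ (map_mul e a x) (map_mul e x b)).symm.to_iff.trans e.injective.eq_iff

namespace Module.End

variable {K V W : Type*} [Field K] [AddCommGroup V] [Module K V] [AddCommGroup W] [Module K W]

theorem ker_aeval_le_of_dvd (f : End K V) {p q : K[X]} (h : p ∣ q) :
    ker (aeval f p) ≤ ker (aeval f q) := by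
  obtain ⟨r, rfl⟩ := h
  intro u hu
  rw [mem_ker] at hu ⊢
  rw [mul_comm, aeval_mul, mul_apply, hu, map_zero]

theorem ker_aeval_gcd_minpoly [DecidableEq K] (f : End K V) (p : K[X]) :
    ker (aeval f (gcd p (minpoly K f))) = ker (aeval f p) := by
  refine le_antisymm (ker_aeval_le_of_dvd f (gcd_dvd_left _ _)) fun u hu => ?_
  obtain ⟨a, b, hab⟩ := exists_gcd_eq_mul_add_mul p (minpoly K f)
  rw [mem_ker] at hu ⊢
  rw [hab, mul_comm p, mul_comm (minpoly K f), map_add, aeval_mul, aeval_mul, minpoly.aeval,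
    mul_zero, add_zero, mul_apply, hu, map_zero]

theorem exists_linearMap_apply_aeval_eq {g : End K V} {w : V}
    (hw : ∀ p : K[X], aeval g p w = 0 → minpoly K g ∣ p)
    (hsurj : Function.Surjective fun p : K[X] => aeval g p w)
    {f : End K W} {u : W} (hu : aeval f (minpoly K g) u = 0) :
    ∃ X : V →ₗ[K] W, ∀ p : K[X], X (aeval g p w) = aeval f p u := by
  let φ : K[X] →ₗ[K] V := applyₗ w ∘ₗ (aeval g).toLinearMap
  let ψ : K[X] →ₗ[K] W := applyₗ u ∘ₗ (aeval f).toLinearMap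
  have hker : ker φ ≤ ker ψ := fun p hp => ker_aeval_le_of_dvd f (hw p hp) hu
  refine ⟨(ker φ).liftQ ψ hker ∘ₗ (φ.quotKerEquivOfSurjective hsurj).symm, fun p => ?_⟩
  have hmk : (φ.quotKerEquivOfSurjective hsurj).symm (φ p) = Submodule.Quotient.mk p := by
    rw [LinearEquiv.symm_apply_eq]; rfl
  exact (congrArg ((ker φ).liftQ ψ hker) hmk).trans (Submodule.liftQ_apply _ _ _)

theorem map_applyₗ_ker_mulLeft_sub_mulRight {g : End K V} {w : V}
    (hw : ∀ p : K[X], aeval g p w = 0 → minpoly K g ∣ p)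
    (hsurj : Function.Surjective fun p : K[X] => aeval g p w) (f : End K V) :
    (ker (mulLeft K f - mulRight K g)).map (applyₗ w) = ker (aeval f (minpoly K g)) := by
  refine le_antisymm ?_ fun u hu => ?_
  · rintro _ ⟨T, hT, rfl⟩
    rw [SetLike.mem_coe, mem_ker_mulLeft_sub_mulRight] at hT
    rw [mem_ker, applyₗ_apply_apply, ← mul_apply,
      ← (SemiconjBy.aeval hT.symm (minpoly K g)).eq, mul_apply, minpoly.aeval,
      LinearMap.zero_apply, map_zero]
  · obtain ⟨T, hT⟩ := exists_linearMap_apply_aeval_eq hw hsurj hu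
    refine ⟨T, ?_, by simpa using hT 1⟩
    rw [SetLike.mem_coe, mem_ker_mulLeft_sub_mulRight]
    ext v
    obtain ⟨p, rfl⟩ := hsurj v
    have hX_mul (h : End K V) (x : V) : h (aeval h p x) = aeval h (X * p) x := by
      rw [aeval_mul, aeval_X, mul_apply]
    rw [mul_apply, mul_apply, hT, hX_mul, hX_mul, hT]

theorem injective_applyₗ_domRestrict_ker_mulLeft_sub_mulRight {g : End K V} {w : V}
    (hsurj : Function.Surjective fun p : K[X] => aeval g p w) (f : End K V) :
    Function.Injective ((applyₗ w).domRestrict (ker (mulLeft K f - mulRight K g))) := by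
  rw [← ker_eq_bot, ker_eq_bot']
  rintro ⟨T, hT⟩ (hTw : T w = 0)
  refine Subtype.ext (LinearMap.ext fun v => ?_)
  obtain ⟨p, rfl⟩ := hsurj v
  rw [mem_ker_mulLeft_sub_mulRight] at hT
  change T (aeval g p w) = 0
  rw [← mul_apply, (SemiconjBy.aeval hT.symm p).eq, mul_apply, hTw, map_zero]

variable [FiniteDimensional K V]

theorem exists_minpoly_dvd_of_aeval_apply_eq_zero (f : End K V) :
    ∃ v : V, ∀ p : K[X], aeval f p v = 0 → minpoly K f ∣ p := by
  obtain ⟨v, hv⟩ := Module.exists_ker_toSpanSingleton_eq_annihilator K[X] (AEval' f)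
  refine ⟨(AEval'.of f).symm v, fun p hp => ?_⟩
  rw [← Ideal.mem_span_singleton, span_minpoly_eq_annihilator, ← hv, mem_ker,
    toSpanSingleton_apply, ← (AEval'.of f).symm.map_eq_zero_iff, AEval.of_symm_smul]
  exact hp

theorem natDegree_le_finrank_of_aeval_mul_apply_mem {f : End K V} {v : V}
    (hv : ∀ p : K[X], aeval f p v = 0 → minpoly K f ∣ p) {c e : K[X]}
    (hce : c * e = minpoly K f) {S : Submodule K V} (hS : ∀ q, aeval f (c * q) v ∈ S) :
    e.natDegree ≤ finrank K S := by
  have hce0 : c * e ≠ 0 := hce ▸ minpoly.ne_zero_of_finite K f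
  let φ : degreeLT K e.natDegree →ₗ[K] V :=
    applyₗ v ∘ₗ (aeval f).toLinearMap ∘ₗ mulLeft K c ∘ₗ
      (degreeLT K e.natDegree).subtype
  have hφ : Function.Injective φ := by
    rw [← ker_eq_bot, ker_eq_bot']
    rintro ⟨q, hq⟩ hφq
    have hdvd : e ∣ q := (mul_dvd_mul_iff_left (left_ne_zero_of_mul hce0)).mp (hce ▸ hv _ hφq)
    refine Subtype.ext (eq_zero_of_dvd_of_degree_lt hdvd ?_)
    rw [degree_eq_natDegree (right_ne_zero_of_mul hce0)]
    exact mem_degreeLT.mp hq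
  calc e.natDegree = finrank K (range φ) := by
        rw [finrank_range_of_inj hφ, (degreeLTEquiv K _).finrank_eq, finrank_fin_fun]
    _ ≤ finrank K S := Submodule.finrank_mono (by rintro _ ⟨q, rfl⟩; exact hS q)

theorem surjective_aeval_apply_of_natDegree_minpoly {f : End K V} {v : V}
    (hv : ∀ p : K[X], aeval f p v = 0 → minpoly K f ∣ p)
    (hf : (minpoly K f).natDegree = finrank K V) :
    Function.Surjective fun p : K[X] => aeval f p v := by
  let ψ : K[X] →ₗ[K] V := applyₗ v ∘ₗ (aeval f).toLinearMap
  have hle : finrank K V ≤ finrank K (range ψ) :=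
    hf ▸ natDegree_le_finrank_of_aeval_mul_apply_mem hv (one_mul _) fun q => ⟨1 * q, rfl⟩
  exact range_eq_top.mp (Submodule.eq_top_of_finrank_eq ((Submodule.finrank_le _).antisymm hle))

theorem finrank_ker_aeval_of_natDegree_minpoly [DecidableEq K] {f : End K V}
    (hf : (minpoly K f).natDegree = finrank K V) (p : K[X]) :
    finrank K (ker (aeval f p)) = (gcd p (minpoly K f)).natDegree := by
  rw [← ker_aeval_gcd_minpoly]
  obtain ⟨v, hv⟩ := exists_minpoly_dvd_of_aeval_apply_eq_zero f
  set d := gcd p (minpoly K f)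
  obtain ⟨e, he⟩ : d ∣ minpoly K f := gcd_dvd_right p (minpoly K f)
  have hker : d.natDegree ≤ finrank K (ker (aeval f d)) := by
    refine natDegree_le_finrank_of_aeval_mul_apply_mem hv ((mul_comm e d).trans he.symm)
      fun q => ?_
    rw [mem_ker, ← mul_apply, ← aeval_mul, ← mul_assoc, ← he, aeval_mul, minpoly.aeval,
      zero_mul, LinearMap.zero_apply]
  have hrange : e.natDegree ≤ finrank K (range (aeval f d)) :=
    natDegree_le_finrank_of_aeval_mul_apply_mem hv he.symm fun q =>
      ⟨aeval f q v, by rw [← mul_apply, ← aeval_mul]⟩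
  have hdeg : d.natDegree + e.natDegree = finrank K V := by
    have hde : d * e ≠ 0 := he ▸ minpoly.ne_zero_of_finite K f
    rw [← hf, he, natDegree_mul (left_ne_zero_of_mul hde) (right_ne_zero_of_mul hde)]
  have := finrank_range_add_finrank_ker (aeval f d)
  omega

theorem finrank_ker_mulLeft_sub_mulRight_of_natDegree_minpoly [DecidableEq K] {f g : End K V}
    (hf : (minpoly K f).natDegree = finrank K V) (hg : (minpoly K g).natDegree = finrank K V) :
    finrank K (ker (mulLeft K f - mulRight K g)) =
      (gcd (minpoly K g) (minpoly K f)).natDegree := by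
  obtain ⟨w, hw⟩ := exists_minpoly_dvd_of_aeval_apply_eq_zero g
  have hsurj := surjective_aeval_apply_of_natDegree_minpoly hw hg
  rw [← finrank_ker_aeval_of_natDegree_minpoly hf,
    ← map_applyₗ_ker_mulLeft_sub_mulRight hw hsurj, ← range_domRestrict, finrank_range_of_inj
      (injective_applyₗ_domRestrict_ker_mulLeft_sub_mulRight hsurj f)]

end Module.End

theorem finrank_twisted_centralizer_of_cyclic_general {F : Type*} [Field F] [DecidableEq F]
    {n : ℕ} (A : Matrix (Fin n) (Fin n) F) (γ : F) (hγ : γ ≠ 0)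
    (hcyc : minpoly F A = A.charpoly) :
    Module.finrank F
      (LinearMap.ker ((LinearMap.mulLeft F A - γ • LinearMap.mulRight F A) :
        Matrix (Fin n) (Fin n) F →ₗ[F] Matrix (Fin n) (Fin n) F)) =
      (gcd ((minpoly F A).twist γ) (minpoly F A)).natDegree := by
  have hA : (minpoly F (Matrix.toLin' A)).natDegree = Module.finrank F (Fin n → F) := by
    rw [Matrix.minpoly_toLin', hcyc, Matrix.charpoly_natDegree_eq_dim, Fintype.card_fin,
      Module.finrank_fin_fun]
  have hγA :
      (minpoly F (Matrix.toLin' (γ • A))).natDegree = Module.finrank F (Fin n → F) := by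
    rw [Matrix.minpoly_toLin', minpoly.smul_eq_twist hγ (Matrix.isIntegral A), natDegree_twist hγ,
      ← hA, Matrix.minpoly_toLin']
  have hL : γ • mulRight F A = mulRight F (γ • A) := by
    ext1 X
    simp
  rw [hL, ← Matrix.toLinAlgEquiv'.finrank_ker_mulLeft_sub_mulRight,
    ← minpoly.smul_eq_twist hγ (Matrix.isIntegral A), ← Matrix.minpoly_toLin' A,
    ← Matrix.minpoly_toLin' (γ • A)]
  exact Module.End.finrank_ker_mulLeft_sub_mulRight_of_natDegree_minpoly hA hγA

/-- If `A ∈ F^{n×n}` is cyclic (its minimal polynomial equals its characteristic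
polynomial) and `γ ≠ 0`, then `dim C(A,γ) = deg gcd(m_A^γ, m_A)`, where `C(A,γ)` is the kernel
of the linear map `X ↦ A*X - γ•(X*A)`. -/
theorem finrank_twisted_centralizer_of_cyclic {F : Type*} [Field F] [Fintype F] [DecidableEq F]
    {n : ℕ} (A : Matrix (Fin n) (Fin n) F) (γ : F) (hγ : γ ≠ 0)
    (hcyc : minpoly F A = A.charpoly) :
    Module.finrank F
      (LinearMap.ker ((LinearMap.mulLeft F A - γ • LinearMap.mulRight F A) :
        Matrix (Fin n) (Fin n) F →ₗ[F] Matrix (Fin n) (Fin n) F)) =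
      (gcd ((minpoly F A).twist γ) (minpoly F A)).natDegree :=
  finrank_twisted_centralizer_of_cyclic_general A γ hγ hcyc
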